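/- arXiv:0811.0474 — 4 statements merged into one kernel-verified Lean document; each statement's English description precedes it below -/
import Mathlib

section
/- Let g ∈ H¹₀(Ω) be nonzero and let (r₁, s₁) be a minimizer of ‖g − r ⊗ s‖² over tensor products. Then ‖r₁ ⊗ s₁‖ = ⟨r₁ ⊗ s₁, g⟩/‖r₁ ⊗ s₁‖ ≥ ⟨r ⊗ s, g⟩/‖r ⊗ s‖ for all nonzero tensor products r ⊗ s; i.e., the minimizer realizes the supremum of ⟨u ⊗ v, g⟩ over normalized tensor products u ⊗ v. -/
open MeasureTheory Filter

noncomputable section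

/-- Smooth compactly supported test functions on an open set `Ω ⊆ ℝ`. -/
def IsTest1 (Ω : Set ℝ) (φ : ℝ → ℝ) : Prop :=
  ContDiff ℝ (⊤ : ℕ∞) φ ∧ HasCompactSupport φ ∧ tsupport φ ⊆ Ω

/-- Smooth compactly supported test functions on an open set `Ω ⊆ ℝ × ℝ`. -/
def IsTest2 (Ω : Set (ℝ × ℝ)) (φ : ℝ × ℝ → ℝ) : Prop :=
  ContDiff ℝ (⊤ : ℕ∞) φ ∧ HasCompactSupport φ ∧ tsupport φ ⊆ Ω

/-- `u'` is a weak derivative of `u` on `Ω ⊆ ℝ`. -/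
def HasWeakDeriv (Ω : Set ℝ) (u u' : ℝ → ℝ) : Prop :=
  ∀ φ : ℝ → ℝ, IsTest1 Ω φ →
    (∫ x in Ω, u x * deriv φ x) = - ∫ x in Ω, u' x * φ x

/-- `du` is a weak gradient of `u` on `Ω ⊆ ℝ × ℝ`. -/
def HasWeakGrad (Ω : Set (ℝ × ℝ)) (u : ℝ × ℝ → ℝ) (du : ℝ × ℝ → ℝ × ℝ) : Prop :=
  ∀ φ : ℝ × ℝ → ℝ, IsTest2 Ω φ →
    ((∫ z in Ω, u z * fderiv ℝ φ z (1, 0)) = - ∫ z in Ω, (du z).1 * φ z) ∧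
    ((∫ z in Ω, u z * fderiv ℝ φ z (0, 1)) = - ∫ z in Ω, (du z).2 * φ z)

/-- Membership in `H¹₀(Ω)` for `Ω ⊆ ℝ`, with weak derivative `u'` :
`u, u' ∈ L²`, `u'` is the weak derivative of `u`, and `u` is approximated in the
`H¹` norm by smooth compactly supported functions. -/
structure MemH10₁ (Ω : Set ℝ) (u u' : ℝ → ℝ) : Prop where
  memL2 : MemLp u 2 (volume.restrict Ω)
  memL2' : MemLp u' 2 (volume.restrict Ω)
  weak : HasWeakDeriv Ω u u'
  approx : ∀ ε : ℝ, 0 < ε → ∃ φ : ℝ → ℝ, IsTest1 Ω φ ∧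
    eLpNorm (fun x => u x - φ x) 2 (volume.restrict Ω) < ENNReal.ofReal ε ∧
    eLpNorm (fun x => u' x - deriv φ x) 2 (volume.restrict Ω) < ENNReal.ofReal ε

/-- Membership in `H¹₀(Ω)` for `Ω ⊆ ℝ × ℝ`, with weak gradient `du`. -/
structure MemH10₂ (Ω : Set (ℝ × ℝ)) (u : ℝ × ℝ → ℝ) (du : ℝ × ℝ → ℝ × ℝ) : Prop where
  memL2 : MemLp u 2 (volume.restrict Ω)
  memL2' : MemLp du 2 (volume.restrict Ω)
  weak : HasWeakGrad Ω u du
  approx : ∀ ε : ℝ, 0 < ε → ∃ φ : ℝ × ℝ → ℝ, IsTest2 Ω φ ∧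
    eLpNorm (fun z => u z - φ z) 2 (volume.restrict Ω) < ENNReal.ofReal ε ∧
    eLpNorm (fun z => du z - (fderiv ℝ φ z (1, 0), fderiv ℝ φ z (0, 1))) 2
      (volume.restrict Ω) < ENNReal.ofReal ε

/-- Tensor product `(r ⊗ s)(x,y) = r(x) s(y)`. -/
def tensor (r s : ℝ → ℝ) : ℝ × ℝ → ℝ := fun z => r z.1 * s z.2

/-- The gradient of the tensor product `r ⊗ s`, given the derivatives `r'`, `s'`. -/
def gradTensor (r r' s s' : ℝ → ℝ) : ℝ × ℝ → ℝ × ℝ :=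
  fun z => (r' z.1 * s z.2, r z.1 * s' z.2)

/-- The `H¹₀(Ω)` inner product `⟨u,v⟩ = ∫_Ω ∇u·∇v`, expressed on gradients. -/
def inner2 (Ω : Set (ℝ × ℝ)) (u v : ℝ × ℝ → ℝ × ℝ) : ℝ :=
  ∫ z in Ω, ((u z).1 * (v z).1 + (u z).2 * (v z).2)




lemma l2_mul_int {α : Type*} [MeasurableSpace α] {μ : Measure α} {f g : α → ℝ}
    (hf : MemLp f 2 μ) (hg : MemLp g 2 μ) : Integrable (fun x => f x * g x) μ := by
  have h := MemLp.smul (p := 2) (q := 2) (r := 1) hg hf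
    (hpqr := ⟨by rw [ENNReal.inv_two_add_inv_two, inv_one]⟩)
  rw [memLp_one_iff_integrable] at h
  exact h

lemma memL2_tensor {r s : ℝ → ℝ} {μ ν : Measure ℝ} [SFinite μ] [SFinite ν]
    (hr : MemLp r 2 μ) (hs : MemLp s 2 ν) :
    MemLp (fun z : ℝ × ℝ => r z.1 * s z.2) 2 (μ.prod ν) := by
  have hm : AEStronglyMeasurable (fun z : ℝ × ℝ => r z.1 * s z.2) (μ.prod ν) :=
    hr.aestronglyMeasurable.comp_fst.mul hs.aestronglyMeasurable.comp_snd
  rw [memLp_two_iff_integrable_sq hm]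
  have h : Integrable (fun z : ℝ × ℝ => (r z.1) ^ 2 * (s z.2) ^ 2) (μ.prod ν) :=
    Integrable.mul_prod hr.integrable_sq hs.integrable_sq
  simpa [mul_pow] using h

lemma expand_int {μ : Measure (ℝ × ℝ)} {f1 f2 t1 t2 : ℝ × ℝ → ℝ}
    (hf1 : MemLp f1 2 μ) (hf2 : MemLp f2 2 μ) (ht1 : MemLp t1 2 μ) (ht2 : MemLp t2 2 μ)
    (lam : ℝ) :
    (∫ z, ((f1 z - lam * t1 z) * (f1 z - lam * t1 z)
        + (f2 z - lam * t2 z) * (f2 z - lam * t2 z)) ∂μ)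
      = (∫ z, (f1 z * f1 z + f2 z * f2 z) ∂μ)
        - 2 * lam * (∫ z, (t1 z * f1 z + t2 z * f2 z) ∂μ)
        + lam ^ 2 * ∫ z, (t1 z * t1 z + t2 z * t2 z) ∂μ := by
  have hA : Integrable (fun z => f1 z * f1 z + f2 z * f2 z) μ :=
    (l2_mul_int hf1 hf1).add (l2_mul_int hf2 hf2)
  have hB : Integrable (fun z => t1 z * f1 z + t2 z * f2 z) μ :=
    (l2_mul_int ht1 hf1).add (l2_mul_int ht2 hf2)
  have hC : Integrable (fun z => t1 z * t1 z + t2 z * t2 z) μ :=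
    (l2_mul_int ht1 ht1).add (l2_mul_int ht2 ht2)
  have hfun : (fun z => (f1 z - lam * t1 z) * (f1 z - lam * t1 z)
        + (f2 z - lam * t2 z) * (f2 z - lam * t2 z))
      = fun z => ((f1 z * f1 z + f2 z * f2 z)
          - (2 * lam) * (t1 z * f1 z + t2 z * f2 z))
          + lam ^ 2 * (t1 z * t1 z + t2 z * t2 z) := by
    funext z; ring
  have hB' : Integrable (fun z => 2 * lam * (t1 z * f1 z + t2 z * f2 z)) μ := hB.const_mul _
  have hC' : Integrable (fun z => lam ^ 2 * (t1 z * t1 z + t2 z * t2 z)) μ := hC.const_mul _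
  have hAB : Integrable
      (fun z => f1 z * f1 z + f2 z * f2 z - 2 * lam * (t1 z * f1 z + t2 z * f2 z)) μ :=
    hA.sub hB'
  rw [hfun, integral_add hAB hC', integral_sub hA hB', integral_const_mul, integral_const_mul]


lemma memH10₁_const_mul {Ω : Set ℝ} {u u' : ℝ → ℝ} (c : ℝ) (h : MemH10₁ Ω u u') :
    MemH10₁ Ω (fun x => c * u x) (fun x => c * u' x) := by
  refine ⟨h.memL2.const_mul c, h.memL2'.const_mul c, ?_, ?_⟩
  · intro φ hφ
    have hw := h.weak φ hφ
    calc (∫ x in Ω, (c * u x) * deriv φ x) = c * ∫ x in Ω, u x * deriv φ x := by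
          simp only [mul_assoc]; rw [integral_const_mul]
      _ = c * (- ∫ x in Ω, u' x * φ x) := by rw [hw]
      _ = - ∫ x in Ω, (c * u' x) * φ x := by
          simp only [mul_assoc]; rw [integral_const_mul]; ring
  · intro ε hε
    by_cases hc : c = 0
    · refine ⟨fun _ => 0, ⟨contDiff_const, ?_, ?_⟩, ?_, ?_⟩
      · simp [HasCompactSupport, tsupport]
      · simp [tsupport]
      · subst hc
        simpa using ENNReal.ofReal_pos.2 hε
      · subst hc
        simpa [deriv_const] using ENNReal.ofReal_pos.2 hε
    · obtain ⟨φ, hφ, h1, h2⟩ := h.approx (ε / |c|) (by positivity)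
      have hce : (‖c‖₊ : ENNReal) ≠ 0 := by simpa using hc
      have hct : (‖c‖₊ : ENNReal) ≠ ⊤ := ENNReal.coe_ne_top
      have hofreal : (‖c‖₊ : ENNReal) * ENNReal.ofReal (ε / |c|) = ENNReal.ofReal ε := by
        rw [← ENNReal.ofReal_coe_nnreal]
        rw [← ENNReal.ofReal_mul (by positivity)]
        congr 1
        rw [coe_nnnorm, Real.norm_eq_abs]
        field_simp
      refine ⟨fun x => c * φ x, ⟨contDiff_const.mul hφ.1, hφ.2.1.mul_left, ?_⟩, ?_, ?_⟩
      · refine subset_trans (closure_mono ?_) hφ.2.2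
        intro x hx
        simp only [Function.mem_support] at hx ⊢
        exact fun h0 => hx (by rw [h0, mul_zero])
      · have he : (fun x => u x - φ x) = fun x => u x - φ x := rfl
        have : (fun x => c * u x - c * φ x) = c • (fun x => u x - φ x) := by
          funext x; simp [smul_eq_mul, mul_sub]
        rw [this, eLpNorm_const_smul, ← hofreal]
        exact ENNReal.mul_lt_mul_right hce hct h1
      · have : (fun x => c * u' x - deriv (fun x => c * φ x) x)
            = c • (fun x => u' x - deriv φ x) := by
          funext x
          rw [deriv_const_mul_field]
          simp [smul_eq_mul, mul_sub]
        rw [this, eLpNorm_const_smul, ← hofreal]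
        exact ENNReal.mul_lt_mul_right hce hct h2


lemma inner2_expand {Ω : Set (ℝ × ℝ)} (f T : ℝ × ℝ → ℝ × ℝ)
    (hf1 : MemLp (fun z => (f z).1) 2 (volume.restrict Ω))
    (hf2 : MemLp (fun z => (f z).2) 2 (volume.restrict Ω))
    (ht1 : MemLp (fun z => (T z).1) 2 (volume.restrict Ω))
    (ht2 : MemLp (fun z => (T z).2) 2 (volume.restrict Ω)) (lam : ℝ) :
    inner2 Ω (fun z => f z - lam • T z) (fun z => f z - lam • T z)
      = inner2 Ω f f - 2 * lam * inner2 Ω T f + lam ^ 2 * inner2 Ω T T := by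
  simp only [inner2, Prod.fst_sub, Prod.snd_sub, Prod.smul_fst, Prod.smul_snd, smul_eq_mul]
  exact expand_int hf1 hf2 ht1 ht2 lam

lemma inner2_self_nonneg (Ω : Set (ℝ × ℝ)) (u : ℝ × ℝ → ℝ × ℝ) : 0 ≤ inner2 Ω u u :=
  integral_nonneg fun _ => add_nonneg (mul_self_nonneg _) (mul_self_nonneg _)

/-- If `g ∈ H¹₀(Ω)` is nonzero and `(r₁, s₁)` is a best rank-one
approximation of `g`, then `‖r₁ ⊗ s₁‖ = ⟨r₁ ⊗ s₁, g⟩ / ‖r₁ ⊗ s₁‖` and this value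
dominates `⟨r ⊗ s, g⟩ / ‖r ⊗ s‖` for every nonzero tensor product `r ⊗ s`. -/
theorem stmt7 (a b c d : ℝ) (hab : a < b) (hcd : c < d)
    (Ω : Set (ℝ × ℝ)) (hΩ : Ω = Set.Ioo a b ×ˢ Set.Ioo c d)
    (g : ℝ × ℝ → ℝ) (dg : ℝ × ℝ → ℝ × ℝ) (hg : MemH10₂ Ω g dg)
    (hgne : ¬ g =ᵐ[volume.restrict Ω] 0)
    (r₁ r₁' s₁ s₁' : ℝ → ℝ)
    (hr₁ : MemH10₁ (Set.Ioo a b) r₁ r₁') (hs₁ : MemH10₁ (Set.Ioo c d) s₁ s₁')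
    (hmin : ∀ r r' s s' : ℝ → ℝ,
      MemH10₁ (Set.Ioo a b) r r' → MemH10₁ (Set.Ioo c d) s s' →
      inner2 Ω (fun z => dg z - gradTensor r₁ r₁' s₁ s₁' z)
          (fun z => dg z - gradTensor r₁ r₁' s₁ s₁' z) ≤
        inner2 Ω (fun z => dg z - gradTensor r r' s s' z)
          (fun z => dg z - gradTensor r r' s s' z)) :
    Real.sqrt (inner2 Ω (gradTensor r₁ r₁' s₁ s₁') (gradTensor r₁ r₁' s₁ s₁')) =
      inner2 Ω (gradTensor r₁ r₁' s₁ s₁') dg /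
        Real.sqrt (inner2 Ω (gradTensor r₁ r₁' s₁ s₁') (gradTensor r₁ r₁' s₁ s₁')) ∧
    ∀ r r' s s' : ℝ → ℝ,
      MemH10₁ (Set.Ioo a b) r r' → MemH10₁ (Set.Ioo c d) s s' →
      ¬ tensor r s =ᵐ[volume.restrict Ω] 0 →
      inner2 Ω (gradTensor r r' s s') dg /
          Real.sqrt (inner2 Ω (gradTensor r r' s s') (gradTensor r r' s s')) ≤
        Real.sqrt
          (inner2 Ω (gradTensor r₁ r₁' s₁ s₁') (gradTensor r₁ r₁' s₁ s₁')) := by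
  subst hΩ
  set S := Set.Ioo a b ×ˢ Set.Ioo c d with hS
  have hmeas : volume.restrict S
      = (volume.restrict (Set.Ioo a b)).prod (volume.restrict (Set.Ioo c d)) := by
    rw [hS, Measure.volume_eq_prod]
    exact (Measure.prod_restrict _ _).symm
  have hf1 : MemLp (fun z => (dg z).1) 2 (volume.restrict S) :=
    (ContinuousLinearMap.fst ℝ ℝ ℝ).comp_memLp' hg.memL2'
  have hf2 : MemLp (fun z => (dg z).2) 2 (volume.restrict S) :=
    (ContinuousLinearMap.snd ℝ ℝ ℝ).comp_memLp' hg.memL2'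
  have hTmem : ∀ {p p' q q' : ℝ → ℝ}, MemH10₁ (Set.Ioo a b) p p' →
      MemH10₁ (Set.Ioo c d) q q' →
      MemLp (fun z => (gradTensor p p' q q' z).1) 2 (volume.restrict S) ∧
      MemLp (fun z => (gradTensor p p' q q' z).2) 2 (volume.restrict S) := by
    intro p p' q q' hp hq
    constructor
    · rw [hmeas]; exact memL2_tensor hp.memL2' hq.memL2
    · rw [hmeas]; exact memL2_tensor hp.memL2 hq.memL2'
  set T₁ := gradTensor r₁ r₁' s₁ s₁' with hT₁
  set N := inner2 S T₁ T₁ with hN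
  set c₁ := inner2 S T₁ dg with hc₁
  have hNpos : 0 ≤ N := inner2_self_nonneg _ _
  have key : ∀ p p' q q' : ℝ → ℝ, MemH10₁ (Set.Ioo a b) p p' →
      MemH10₁ (Set.Ioo c d) q q' → ∀ lam : ℝ,
      inner2 S dg dg - 2 * c₁ + N
        ≤ inner2 S dg dg - 2 * lam * inner2 S (gradTensor p p' q q') dg
          + lam ^ 2 * inner2 S (gradTensor p p' q q') (gradTensor p p' q q') := by
    intro p p' q q' hp hq lam
    obtain ⟨ht1, ht2⟩ := hTmem hp hq
    obtain ⟨hu1, hu2⟩ := hTmem hr₁ hs₁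
    have hmin' := hmin (fun x => lam * p x) (fun x => lam * p' x) q q'
      (memH10₁_const_mul lam hp) hq
    have hGT : gradTensor (fun x => lam * p x) (fun x => lam * p' x) q q'
        = fun z => lam • gradTensor p p' q q' z := by
      funext z
      simp only [gradTensor, Prod.smul_mk, smul_eq_mul, Prod.mk.injEq]
      constructor <;> ring
    rw [hGT] at hmin'
    have h1 : (fun z => dg z - T₁ z) = fun z => dg z - (1 : ℝ) • T₁ z := by
      funext z; rw [one_smul]
    rw [h1] at hmin'
    rw [inner2_expand dg T₁ hf1 hf2 hu1 hu2 1,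
      inner2_expand dg (gradTensor p p' q q') hf1 hf2 ht1 ht2 lam] at hmin'
    rw [← hN, ← hc₁] at hmin'
    nlinarith [hmin']
  have hNc : N = c₁ := by
    have hN1 : (0 : ℝ) < N + 1 := by linarith
    set u : ℝ := (c₁ - N) / (N + 1) with hu_def
    have hu : u * (N + 1) = c₁ - N := div_mul_cancel₀ _ (ne_of_gt hN1)
    have h := key r₁ r₁' s₁ s₁' hr₁ hs₁ (1 + u)
    rw [← hT₁, ← hN, ← hc₁] at h
    have hprod : u * (u * (N + 1)) = u * (c₁ - N) := by rw [hu]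
    have h1 : u ^ 2 * (N + 2) ≤ 0 := by nlinarith [h, hprod]
    have h2 : u ^ 2 = 0 := le_antisymm (by nlinarith [h1]) (sq_nonneg u)
    have h3 : u = 0 := by
      exact pow_eq_zero_iff two_ne_zero |>.mp h2
    have h4 : c₁ - N = 0 := by rw [← hu, h3]; ring
    linarith
  constructor
  · rcases eq_or_lt_of_le hNpos with h0 | h0
    · have hc0 : c₁ = 0 := by rw [← hNc, ← h0]
      rw [← h0, hc0]; simp
    · rw [← hNc, eq_div_iff (ne_of_gt (Real.sqrt_pos.2 h0))]
      exact Real.mul_self_sqrt hNpos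
  · intro r r' s s' hr hs _
    set M := inner2 S (gradTensor r r' s s') (gradTensor r r' s s') with hM_def
    set c := inner2 S (gradTensor r r' s s') dg with hc_def
    have hM : 0 ≤ M := inner2_self_nonneg _ _
    have hQ : ∀ lam : ℝ, 2 * lam * c ≤ lam ^ 2 * M + N := by
      intro lam
      have h := key r r' s s' hr hs lam
      rw [← hM_def, ← hc_def] at h
      linarith [h, hNc.symm.le, hNc.le]
    rcases le_or_gt c 0 with hc | hc
    · have hd : c / Real.sqrt M ≤ 0 :=
        div_nonpos_of_nonpos_of_nonneg hc (Real.sqrt_nonneg M)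
      exact hd.trans (Real.sqrt_nonneg N)
    · have hMpos : 0 < M := by
        rcases hM.lt_or_eq with h | h
        · exact h
        · exfalso
          have h2 := hQ ((N + 1) / (2 * c))
          rw [← h] at h2
          have he : 2 * ((N + 1) / (2 * c)) * c = N + 1 := by field_simp
          nlinarith [h2, he]
      have hMne : M ≠ 0 := ne_of_gt hMpos
      have e1 : 2 * (c / M) * c = 2 * (c ^ 2 / M) := by ring
      have e2 : (c / M) ^ 2 * M = c ^ 2 / M := by field_simp
      have h := hQ (c / M)
      rw [e1, e2] at h
      have hc2 : c ^ 2 ≤ N * M := by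
        have hd : c ^ 2 / M ≤ N := by linarith
        calc c ^ 2 = (c ^ 2 / M) * M := by field_simp
          _ ≤ N * M := mul_le_mul_of_nonneg_right hd hM
      rw [div_le_iff₀ (Real.sqrt_pos.2 hMpos)]
      calc c = Real.sqrt (c ^ 2) := (Real.sqrt_sq hc.le).symm
        _ ≤ Real.sqrt (N * M) := Real.sqrt_le_sqrt hc2
        _ = Real.sqrt N * Real.sqrt M := Real.sqrt_mul hNpos M

end
end

section
/- Let (a_n) be a sequence of nonnegative reals and A > 0 with a₁ ≤ A and a_{n+1} ≤ a_n(1 − a_n/A) for all n ≥ 1. Then a_n ≤ A/n for all n ≥ 1. -/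
/-- DeVore–Temlyakov Lemma 3.4. If `(a_n)` is a sequence of
nonnegative reals, `A > 0`, `a₁ ≤ A` and `a_{n+1} ≤ a n (1 - a_n / A)` for `n ≥ 1`,
then `a_n ≤ A / n` for all `n ≥ 1`. -/
theorem stmt11 (a : ℕ → ℝ) (A : ℝ) (hA : 0 < A) (hpos : ∀ n, 0 ≤ a n)
    (h1 : a 1 ≤ A) (hrec : ∀ n : ℕ, 1 ≤ n → a (n + 1) ≤ a n * (1 - a n / A)) :
    ∀ n : ℕ, 1 ≤ n → a n ≤ A / n := by
  intro n hn
  induction n with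
  | zero => omega
  | succ m ih =>
    rcases Nat.eq_or_lt_of_le hn with h | h
    · rw [← h]; simpa using h1
    · have hm : 1 ≤ m := by omega
      have ihm := ih hm
      have hr := hrec m hm
      have hmp : (0:ℝ) < m := by exact_mod_cast hm
      have hx := hpos m
      have h2 : a m * m ≤ A := by
        rw [le_div_iff₀ hmp] at ihm; exact ihm
      have hm1 : (1:ℝ) ≤ m := by exact_mod_cast hm
      have hAm : a m ≤ A := by nlinarith [mul_nonneg hx (sub_nonneg.2 hm1)]
      have key : a m * (1 - a m / A) ≤ A / (m + 1) := by
        rw [le_div_iff₀ (by positivity), ← sub_nonneg]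
        have heq : A - a m * (1 - a m / A) * ((m:ℝ) + 1) =
            ((A - a m) * (A - a m * m) + a m ^ 2) / A := by
          field_simp; ring
        rw [heq]
        apply div_nonneg _ hA.le
        nlinarith [mul_nonneg (sub_nonneg.2 hAm) (sub_nonneg.2 h2), sq_nonneg (a m)]
      push_cast
      push_cast at key
      linarith
end

section
/- Key estimate for the Orthogonal Greedy Algorithm: with notation as in the algorithm, if g ∈ 𝓛¹ then for each n, ‖r_{n+1}^o ⊗ s_{n+1}^o‖ = ⟨g_n^o, r_{n+1}^o ⊗ s_{n+1}^o⟩/‖r_{n+1}^o ⊗ s_{n+1}^o‖ ≥ ‖g_n^o‖²/‖g‖_{𝓛¹}. -/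
open MeasureTheory Filter

noncomputable section

section StmtAux

open scoped RealInnerProductSpace InnerProductSpace

lemma memL2_fst_aux {μ : Measure (ℝ × ℝ)} {f : ℝ × ℝ → ℝ × ℝ} (hf : MemLp f 2 μ) :
    MemLp (fun z => (f z).1) 2 μ :=
  hf.of_le (continuous_fst.comp_aestronglyMeasurable hf.aestronglyMeasurable)
    (Filter.Eventually.of_forall fun z => by simpa using norm_fst_le (f z))

lemma memL2_snd_aux {μ : Measure (ℝ × ℝ)} {f : ℝ × ℝ → ℝ × ℝ} (hf : MemLp f 2 μ) :
    MemLp (fun z => (f z).2) 2 μ :=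
  hf.of_le (continuous_snd.comp_aestronglyMeasurable hf.aestronglyMeasurable)
    (Filter.Eventually.of_forall fun z => by simpa using norm_snd_le (f z))

lemma memL2_tensor_aux {f g : ℝ → ℝ} {μ ν : Measure ℝ} [SigmaFinite μ] [SigmaFinite ν]
    (hf : MemLp f 2 μ) (hg : MemLp g 2 ν) :
    MemLp (fun z : ℝ × ℝ => f z.1 * g z.2) 2 (μ.prod ν) := by
  have hfm : AEStronglyMeasurable (fun z : ℝ × ℝ => f z.1) (μ.prod ν) :=
    hf.aestronglyMeasurable.comp_quasiMeasurePreserving Measure.quasiMeasurePreserving_fst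
  have hgm : AEStronglyMeasurable (fun z : ℝ × ℝ => g z.2) (μ.prod ν) :=
    hg.aestronglyMeasurable.comp_quasiMeasurePreserving Measure.quasiMeasurePreserving_snd
  have hm : AEStronglyMeasurable (fun z : ℝ × ℝ => f z.1 * g z.2) (μ.prod ν) := hfm.mul hgm
  rw [memLp_two_iff_integrable_sq hm]
  have h1 : Integrable (fun x => f x ^ 2) μ :=
    (memLp_two_iff_integrable_sq hf.aestronglyMeasurable).mp hf
  have h2 : Integrable (fun y => g y ^ 2) ν :=
    (memLp_two_iff_integrable_sq hg.aestronglyMeasurable).mp hg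
  exact (h1.mul_prod h2).congr (Filter.Eventually.of_forall fun z => by ring)

lemma MemH10₁.neg {Ω : Set ℝ} {u u' : ℝ → ℝ} (h : MemH10₁ Ω u u') :
    MemH10₁ Ω (fun x => -u x) (fun x => -u' x) := by
  refine ⟨h.memL2.neg, h.memL2'.neg, ?_, ?_⟩
  · intro φ hφ
    have hw := h.weak φ hφ
    simp only [neg_mul]
    rw [integral_neg, integral_neg, hw, neg_neg]
  · intro ε hε
    obtain ⟨φ, hφ, h1, h2⟩ := h.approx ε hε
    refine ⟨fun x => -φ x, ⟨hφ.1.neg, hφ.2.1.neg, ?_⟩, ?_, ?_⟩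
    · have hts : tsupport (fun x => -φ x) = tsupport φ := by
        unfold tsupport
        rw [Function.support_fun_neg]
      rw [hts]; exact hφ.2.2
    · have e : (fun x => -u x - -φ x) = -(fun x => u x - φ x) := by
        funext x; simp only [Pi.neg_apply]; ring
      show eLpNorm (fun x => -u x - -φ x) 2 (volume.restrict Ω) < ENNReal.ofReal ε
      rw [e, eLpNorm_neg]; exact h1
    · have e : (fun x => -u' x - deriv (fun y => -φ y) x) = -(fun x => u' x - deriv φ x) := by
        funext x; simp only [Pi.neg_apply, deriv.fun_neg]; ring
      show eLpNorm (fun x => -u' x - deriv (fun y => -φ y) x) 2 (volume.restrict Ω)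
        < ENNReal.ofReal ε
      rw [e, eLpNorm_neg]; exact h2

lemma inner2_eq_inner_aux {Ω : Set (ℝ × ℝ)} {f g : ℝ × ℝ → ℝ × ℝ}
    (F1 F2 G1 G2 : Lp ℝ 2 (volume.restrict Ω))
    (hF1 : ⇑F1 =ᵐ[volume.restrict Ω] fun z => (f z).1)
    (hF2 : ⇑F2 =ᵐ[volume.restrict Ω] fun z => (f z).2)
    (hG1 : ⇑G1 =ᵐ[volume.restrict Ω] fun z => (g z).1)
    (hG2 : ⇑G2 =ᵐ[volume.restrict Ω] fun z => (g z).2) :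
    inner2 Ω f g = ⟪F1, G1⟫_ℝ + ⟪F2, G2⟫_ℝ := by
  have e1 : (fun z => (inner ℝ (F1 z) (G1 z) : ℝ)) =ᵐ[volume.restrict Ω]
      fun z => (f z).1 * (g z).1 := by
    filter_upwards [hF1, hG1] with z h1 h2
    simp [RCLike.inner_apply, starRingEnd_apply, h1, h2, mul_comm]
  have e2 : (fun z => (inner ℝ (F2 z) (G2 z) : ℝ)) =ᵐ[volume.restrict Ω]
      fun z => (f z).2 * (g z).2 := by
    filter_upwards [hF2, hG2] with z h1 h2
    simp [RCLike.inner_apply, starRingEnd_apply, h1, h2, mul_comm]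
  have i1 : Integrable (fun z => (f z).1 * (g z).1) (volume.restrict Ω) :=
    (L2.integrable_inner (𝕜 := ℝ) F1 G1).congr e1
  have i2 : Integrable (fun z => (f z).2 * (g z).2) (volume.restrict Ω) :=
    (L2.integrable_inner (𝕜 := ℝ) F2 G2).congr e2
  unfold inner2
  rw [integral_add i1 i2, L2.inner_def, L2.inner_def,
    integral_congr_ae e1, integral_congr_ae e2]

lemma coeFn_sum_smul_aux {α : Type*} {m : MeasurableSpace α} {μ : Measure α} (c : ℕ → ℝ)
    (F : ℕ → α → ℝ) (hF : ∀ k, MemLp (F k) 2 μ) (n : ℕ) :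
    ⇑(∑ k ∈ Finset.range n, c k • ((hF k).toLp (F k))) =ᵐ[μ]
      fun z => ∑ k ∈ Finset.range n, c k • F k z := by
  induction n with
  | zero =>
    simp only [Finset.range_zero, Finset.sum_empty]
    filter_upwards [Lp.coeFn_zero ℝ 2 μ] with z hz
    simpa using hz
  | succ n ih =>
    simp only [Finset.sum_range_succ]
    filter_upwards [Lp.coeFn_add (∑ k ∈ Finset.range n, c k • ((hF k).toLp (F k)))
      (c n • ((hF n).toLp (F n))), ih, Lp.coeFn_smul (c n) ((hF n).toLp (F n)),
      (hF n).coeFn_toLp] with z h1 h2 h3 h4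
    simp only [Pi.add_apply] at h1
    simp only [Pi.smul_apply] at h3
    rw [h1, h2, h3, h4]

end StmtAux

open scoped RealInnerProductSpace InnerProductSpace

/-- Key estimate for the Orthogonal Greedy Algorithm: if
`g ∈ 𝓛¹` (with a representation `Σ c_k u_k ⊗ v_k` by normalized tensor products),
`g_n` is the Galerkin residual (so `⟨g - g_n, g_n⟩ = 0`), and `r ⊗ s` is a best
rank-one approximation of `g_n` (satisfying the maximal-correlation property),
then `‖r ⊗ s‖ = ⟨g_n, r ⊗ s⟩ / ‖r ⊗ s‖ ≥ ‖g_n‖² / Σ|c_k| ≥ ‖g_n‖²/‖g‖_{𝓛¹}`. -/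
theorem stmt15 (a b c d : ℝ) (hab : a < b) (hcd : c < d)
    (Ω : Set (ℝ × ℝ)) (hΩ : Ω = Set.Ioo a b ×ˢ Set.Ioo c d)
    (g : ℝ × ℝ → ℝ) (dg : ℝ × ℝ → ℝ × ℝ) (hg : MemH10₂ Ω g dg)
    -- a representation of `g` in `𝓛¹`
    (co : ℕ → ℝ) (u u' v v' : ℕ → ℝ → ℝ)
    (hu : ∀ k, MemH10₁ (Set.Ioo a b) (u k) (u' k))
    (hv : ∀ k, MemH10₁ (Set.Ioo c d) (v k) (v' k))
    (hnorm : ∀ k, inner2 Ω (gradTensor (u k) (u' k) (v k) (v' k))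
      (gradTensor (u k) (u' k) (v k) (v' k)) = 1)
    (hsum : Summable fun k => |co k|)
    (hconv : Tendsto (fun n =>
      inner2 Ω
        (fun z => dg z - ∑ k ∈ Finset.range n,
          co k • gradTensor (u k) (u' k) (v k) (v' k) z)
        (fun z => dg z - ∑ k ∈ Finset.range n,
          co k • gradTensor (u k) (u' k) (v k) (v' k) z)) atTop (nhds 0))
    -- the Galerkin residual `g_n`, orthogonal to `g - g_n`
    (gn : ℝ × ℝ → ℝ) (dgn : ℝ × ℝ → ℝ × ℝ) (hgn : MemH10₂ Ω gn dgn)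
    (hGalerkin : inner2 Ω (fun z => dg z - dgn z) dgn = 0)
    -- `r ⊗ s` : the next greedy direction, a best rank-one approximation of `g_n`
    (r r' s s' : ℝ → ℝ)
    (hr : MemH10₁ (Set.Ioo a b) r r') (hs : MemH10₁ (Set.Ioo c d) s s')
    (heq : Real.sqrt (inner2 Ω (gradTensor r r' s s') (gradTensor r r' s s')) =
      inner2 Ω dgn (gradTensor r r' s s') /
        Real.sqrt (inner2 Ω (gradTensor r r' s s') (gradTensor r r' s s')))
    (hmax : ∀ ρ ρ' σ σ' : ℝ → ℝ,
      MemH10₁ (Set.Ioo a b) ρ ρ' → MemH10₁ (Set.Ioo c d) σ σ' →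
      inner2 Ω dgn (gradTensor ρ ρ' σ σ') /
          Real.sqrt (inner2 Ω (gradTensor ρ ρ' σ σ') (gradTensor ρ ρ' σ σ')) ≤
        Real.sqrt (inner2 Ω (gradTensor r r' s s') (gradTensor r r' s s'))) :
    inner2 Ω dgn dgn / (∑' k, |co k|) ≤
      Real.sqrt (inner2 Ω (gradTensor r r' s s') (gradTensor r r' s s')) := by
  classical
  have hμ : volume.restrict Ω
      = ((volume.restrict (Set.Ioo a b)).prod (volume.restrict (Set.Ioo c d))) := by
    rw [hΩ, Measure.prod_restrict, ← Measure.volume_eq_prod]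
  -- component memberships in L²
  have hT1 : ∀ k, MemLp (fun z : ℝ × ℝ => u' k z.1 * v k z.2) 2 (volume.restrict Ω) := by
    intro k; rw [hμ]; exact memL2_tensor_aux (hu k).memL2' (hv k).memL2
  have hT2 : ∀ k, MemLp (fun z : ℝ × ℝ => u k z.1 * v' k z.2) 2 (volume.restrict Ω) := by
    intro k; rw [hμ]; exact memL2_tensor_aux (hu k).memL2 (hv k).memL2'
  have hgn1 := memL2_fst_aux hgn.memL2'
  have hgn2 := memL2_snd_aux hgn.memL2'
  have hg1 := memL2_fst_aux hg.memL2'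
  have hg2 := memL2_snd_aux hg.memL2'
  set M := Real.sqrt (inner2 Ω (gradTensor r r' s s') (gradTensor r r' s s')) with hM
  have hM0 : 0 ≤ M := Real.sqrt_nonneg _
  -- the correlations with the normalized tensors are bounded by M
  have hik : ∀ k, |inner2 Ω dgn (gradTensor (u k) (u' k) (v k) (v' k))| ≤ M := by
    intro k
    rw [abs_le]
    constructor
    · have hneg := hmax (fun x => -u k x) (fun x => -u' k x) (v k) (v' k)
        (hu k).neg (hv k)
      have e1 : inner2 Ω
          (gradTensor (fun x => -u k x) (fun x => -u' k x) (v k) (v' k))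
          (gradTensor (fun x => -u k x) (fun x => -u' k x) (v k) (v' k))
          = inner2 Ω (gradTensor (u k) (u' k) (v k) (v' k))
            (gradTensor (u k) (u' k) (v k) (v' k)) := by
        unfold inner2 gradTensor
        refine integral_congr_ae (Filter.Eventually.of_forall fun z => ?_)
        beta_reduce
        ring
      have e2 : inner2 Ω dgn
          (gradTensor (fun x => -u k x) (fun x => -u' k x) (v k) (v' k))
          = - inner2 Ω dgn (gradTensor (u k) (u' k) (v k) (v' k)) := by
        unfold inner2 gradTensor
        rw [← integral_neg]
        refine integral_congr_ae (Filter.Eventually.of_forall fun z => ?_)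
        beta_reduce
        ring
      rw [e1, e2, hnorm k, Real.sqrt_one, div_one] at hneg
      linarith
    · have h := hmax (u k) (u' k) (v k) (v' k) (hu k) (hv k)
      rw [hnorm k, Real.sqrt_one, div_one] at h
      exact h
  -- the L² elements
  set GN1 : Lp ℝ 2 (volume.restrict Ω) := hgn1.toLp _ with hGN1
  set GN2 : Lp ℝ 2 (volume.restrict Ω) := hgn2.toLp _ with hGN2
  set GG1 : Lp ℝ 2 (volume.restrict Ω) := hg1.toLp _ with hGG1
  set GG2 : Lp ℝ 2 (volume.restrict Ω) := hg2.toLp _ with hGG2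
  set TL1 : ℕ → Lp ℝ 2 (volume.restrict Ω) := fun k => (hT1 k).toLp _ with hTL1
  set TL2 : ℕ → Lp ℝ 2 (volume.restrict Ω) := fun k => (hT2 k).toLp _ with hTL2
  set AA : ℕ → Lp ℝ 2 (volume.restrict Ω) :=
    fun n => ∑ k ∈ Finset.range n, co k • TL1 k with hAA
  set BB : ℕ → Lp ℝ 2 (volume.restrict Ω) :=
    fun n => ∑ k ∈ Finset.range n, co k • TL2 k with hBB
  have cGN1 : ⇑GN1 =ᵐ[volume.restrict Ω] fun z => (dgn z).1 := hgn1.coeFn_toLp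
  have cGN2 : ⇑GN2 =ᵐ[volume.restrict Ω] fun z => (dgn z).2 := hgn2.coeFn_toLp
  have cGG1 : ⇑GG1 =ᵐ[volume.restrict Ω] fun z => (dg z).1 := hg1.coeFn_toLp
  have cGG2 : ⇑GG2 =ᵐ[volume.restrict Ω] fun z => (dg z).2 := hg2.coeFn_toLp
  have cAA : ∀ n, ⇑(AA n) =ᵐ[volume.restrict Ω]
      fun z => ∑ k ∈ Finset.range n, co k • (u' k z.1 * v k z.2) := fun n =>
    coeFn_sum_smul_aux co _ hT1 n
  have cBB : ∀ n, ⇑(BB n) =ᵐ[volume.restrict Ω]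
      fun z => ∑ k ∈ Finset.range n, co k • (u k z.1 * v' k z.2) := fun n =>
    coeFn_sum_smul_aux co _ hT2 n
  -- `inner2 dgn dgn` expressed in L²
  have hI : inner2 Ω dgn dgn = ⟪GN1, GN1⟫_ℝ + ⟪GN2, GN2⟫_ℝ :=
    inner2_eq_inner_aux GN1 GN2 GN1 GN2 cGN1 cGN2 cGN1 cGN2
  -- Galerkin orthogonality in L²
  have cD1 : ⇑(GG1 - GN1) =ᵐ[volume.restrict Ω]
      fun z => ((fun w => dg w - dgn w) z).1 := by
    filter_upwards [Lp.coeFn_sub GG1 GN1, cGG1, cGN1] with z h1 h2 h3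
    rw [h1]; simp [h2, h3]
  have cD2 : ⇑(GG2 - GN2) =ᵐ[volume.restrict Ω]
      fun z => ((fun w => dg w - dgn w) z).2 := by
    filter_upwards [Lp.coeFn_sub GG2 GN2, cGG2, cGN2] with z h1 h2 h3
    rw [h1]; simp [h2, h3]
  have hGal : ⟪GG1 - GN1, GN1⟫_ℝ + ⟪GG2 - GN2, GN2⟫_ℝ = 0 := by
    rw [← inner2_eq_inner_aux (GG1 - GN1) (GG2 - GN2) GN1 GN2 cD1 cD2 cGN1 cGN2]
    exact hGalerkin
  have hGal2 : ⟪GN1, GN1⟫_ℝ + ⟪GN2, GN2⟫_ℝ = ⟪GN1, GG1⟫_ℝ + ⟪GN2, GG2⟫_ℝ := by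
    rw [inner_sub_left, inner_sub_left] at hGal
    have hc1 : ⟪GG1, GN1⟫_ℝ = ⟪GN1, GG1⟫_ℝ := real_inner_comm _ _
    have hc2 : ⟪GG2, GN2⟫_ℝ = ⟪GN2, GG2⟫_ℝ := real_inner_comm _ _
    linarith
  -- convergence of the partial sums in L²
  have cX1 : ∀ n, ⇑(GG1 - AA n) =ᵐ[volume.restrict Ω]
      fun z => ((fun w => dg w - ∑ k ∈ Finset.range n,
        co k • gradTensor (u k) (u' k) (v k) (v' k) w) z).1 := by
    intro n
    filter_upwards [Lp.coeFn_sub GG1 (AA n), cGG1, cAA n] with z h1 h2 h3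
    rw [h1]
    simp [h2, h3, gradTensor, Prod.fst_sum]
  have cX2 : ∀ n, ⇑(GG2 - BB n) =ᵐ[volume.restrict Ω]
      fun z => ((fun w => dg w - ∑ k ∈ Finset.range n,
        co k • gradTensor (u k) (u' k) (v k) (v' k) w) z).2 := by
    intro n
    filter_upwards [Lp.coeFn_sub GG2 (BB n), cGG2, cBB n] with z h1 h2 h3
    rw [h1]
    simp [h2, h3, gradTensor, Prod.snd_sum]
  have hXself : ∀ n, inner2 Ω
      (fun z => dg z - ∑ k ∈ Finset.range n,
        co k • gradTensor (u k) (u' k) (v k) (v' k) z)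
      (fun z => dg z - ∑ k ∈ Finset.range n,
        co k • gradTensor (u k) (u' k) (v k) (v' k) z)
      = ⟪GG1 - AA n, GG1 - AA n⟫_ℝ + ⟪GG2 - BB n, GG2 - BB n⟫_ℝ := fun n =>
    inner2_eq_inner_aux _ _ _ _ (cX1 n) (cX2 n) (cX1 n) (cX2 n)
  have hconv' : Tendsto (fun n =>
      ⟪GG1 - AA n, GG1 - AA n⟫_ℝ + ⟪GG2 - BB n, GG2 - BB n⟫_ℝ) atTop (nhds 0) :=
    hconv.congr hXself
  have t1 : Tendsto (fun n => ‖GG1 - AA n‖) atTop (nhds 0) := by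
    have q1 : Tendsto (fun n => ⟪GG1 - AA n, GG1 - AA n⟫_ℝ) atTop (nhds 0) :=
      squeeze_zero (fun n => real_inner_self_nonneg)
        (fun n => le_add_of_nonneg_right real_inner_self_nonneg) hconv'
    have q2 : Tendsto (fun n => Real.sqrt ⟪GG1 - AA n, GG1 - AA n⟫_ℝ) atTop (nhds 0) := by
      have := (Real.continuous_sqrt.tendsto' 0 0 Real.sqrt_zero).comp q1
      exact this
    refine q2.congr fun n => ?_
    rw [real_inner_self_eq_norm_sq, Real.sqrt_sq (norm_nonneg _)]
  have t2 : Tendsto (fun n => ‖GG2 - BB n‖) atTop (nhds 0) := by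
    have q1 : Tendsto (fun n => ⟪GG2 - BB n, GG2 - BB n⟫_ℝ) atTop (nhds 0) :=
      squeeze_zero (fun n => real_inner_self_nonneg)
        (fun n => le_add_of_nonneg_left real_inner_self_nonneg) hconv'
    have q2 : Tendsto (fun n => Real.sqrt ⟪GG2 - BB n, GG2 - BB n⟫_ℝ) atTop (nhds 0) := by
      have := (Real.continuous_sqrt.tendsto' 0 0 Real.sqrt_zero).comp q1
      exact this
    refine q2.congr fun n => ?_
    rw [real_inner_self_eq_norm_sq, Real.sqrt_sq (norm_nonneg _)]
  have tA : Tendsto AA atTop (nhds GG1) := by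
    rw [tendsto_iff_norm_sub_tendsto_zero]
    refine t1.congr fun n => ?_
    rw [norm_sub_rev]
  have tB : Tendsto BB atTop (nhds GG2) := by
    rw [tendsto_iff_norm_sub_tendsto_zero]
    refine t2.congr fun n => ?_
    rw [norm_sub_rev]
  have tInner : Tendsto (fun n => ⟪GN1, AA n⟫_ℝ + ⟪GN2, BB n⟫_ℝ) atTop
      (nhds (⟪GN1, GG1⟫_ℝ + ⟪GN2, GG2⟫_ℝ)) :=
    (Filter.Tendsto.inner tendsto_const_nhds tA).add
      (Filter.Tendsto.inner tendsto_const_nhds tB)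
  -- the uniform bound on the partial sums
  have iT : ∀ k, inner2 Ω dgn (gradTensor (u k) (u' k) (v k) (v' k))
      = ⟪GN1, TL1 k⟫_ℝ + ⟪GN2, TL2 k⟫_ℝ := fun k =>
    inner2_eq_inner_aux GN1 GN2 (TL1 k) (TL2 k) cGN1 cGN2
      ((hT1 k).coeFn_toLp) ((hT2 k).coeFn_toLp)
  have bound : ∀ n, ⟪GN1, AA n⟫_ℝ + ⟪GN2, BB n⟫_ℝ ≤ (∑' k, |co k|) * M := by
    intro n
    have e : ⟪GN1, AA n⟫_ℝ + ⟪GN2, BB n⟫_ℝ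
        = ∑ k ∈ Finset.range n,
            co k * inner2 Ω dgn (gradTensor (u k) (u' k) (v k) (v' k)) := by
      simp only [hAA, hBB]
      rw [inner_sum, inner_sum, ← Finset.sum_add_distrib]
      refine Finset.sum_congr rfl fun k _ => ?_
      rw [real_inner_smul_right, real_inner_smul_right, iT k]
      ring
    rw [e]
    calc ∑ k ∈ Finset.range n,
          co k * inner2 Ω dgn (gradTensor (u k) (u' k) (v k) (v' k))
        ≤ ∑ k ∈ Finset.range n, |co k| * M := by
          refine Finset.sum_le_sum fun k _ => ?_
          calc co k * inner2 Ω dgn (gradTensor (u k) (u' k) (v k) (v' k))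
              ≤ |co k * inner2 Ω dgn (gradTensor (u k) (u' k) (v k) (v' k))| :=
                le_abs_self _
            _ = |co k| * |inner2 Ω dgn (gradTensor (u k) (u' k) (v k) (v' k))| :=
                abs_mul _ _
            _ ≤ |co k| * M := mul_le_mul_of_nonneg_left (hik k) (abs_nonneg _)
      _ = (∑ k ∈ Finset.range n, |co k|) * M := (Finset.sum_mul _ _ _).symm
      _ ≤ (∑' k, |co k|) * M :=
          mul_le_mul_of_nonneg_right
            (Summable.sum_le_tsum _ (fun i _ => abs_nonneg _) hsum) hM0
  have key : ⟪GN1, GN1⟫_ℝ + ⟪GN2, GN2⟫_ℝ ≤ (∑' k, |co k|) * M := by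
    rw [hGal2]
    exact le_of_tendsto tInner (Filter.Eventually.of_forall bound)
  have hS0 : 0 ≤ ∑' k, |co k| := tsum_nonneg fun k => abs_nonneg _
  rcases eq_or_lt_of_le hS0 with h0 | hpos
  · rw [← h0, div_zero]
    exact hM0
  · rw [div_le_iff₀ hpos, hI]
    calc ⟪GN1, GN1⟫_ℝ + ⟪GN2, GN2⟫_ℝ ≤ (∑' k, |co k|) * M := key
      _ = M * (∑' k, |co k|) := mul_comm _ _

end
end

section
/- Non-uniqueness of Euler-Lagrange solutions for the Poisson greedy step: let φ₁, φ₂ ∈ H¹₀(0,1) be L²-orthonormal Dirichlet eigenfunctions of −d²/dx² with distinct eigenvalues λ₁ ≠ λ₂, and let f = −Δg with g = α₁ φ₁ ⊗ φ₁ + α₂ φ₂ ⊗ φ₂ where α₁ = (9λ₁ + λ₂)/(4λ₁) and α₂ = (2λ₁ + 3λ₂)/(2λ₂). Then r = φ₁ + ½φ₂ and s = 2φ₁ + φ₂ solve the Euler-Lagrange equations −(∫|s|²) r'' + (∫|s'|²) r = ∫ f(·,y) s(y) dy and −(∫|r|²) s'' + (∫|r'|²) s = ∫ f(x,·) r(x)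 dx, even though r ⊗ s is not of the form α_k φ_k ⊗ φ_k. -/
open MeasureTheory Filter

noncomputable section

/-- The Euler–Lagrange equations of the best rank-one `L²` approximation
(continuous SVD) of `g` on `Ω_x × Ω_y` :
`(∫ s²) r = ∫_{Ω_y} g(·,y) s(y) dy` and `(∫ r²) s = ∫_{Ω_x} g(x,·) r(x) dx`,
as a.e. identities. -/
def SVD_EL (Ωx Ωy : Set ℝ) (g : ℝ × ℝ → ℝ) (r s : ℝ → ℝ) : Prop :=
  (∀ᵐ x ∂volume.restrict Ωx,
    (∫ y in Ωy, (s y) ^ 2) * r x = ∫ y in Ωy, g (x, y) * s y) ∧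
  (∀ᵐ y ∂volume.restrict Ωy,
    (∫ x in Ωx, (r x) ^ 2) * s y = ∫ x in Ωx, g (x, y) * r x)

/-- A nondegenerate singular value decomposition `g = Σ λ_n u_n ⊗ v_n` in
`L²(Ω_x × Ω_y)` : `(u_n)`, `(v_n)` orthonormal families, `λ_n > 0` strictly
decreasing, with the series converging to `g` in `L²`. -/
structure IsSVD (Ωx Ωy : Set ℝ) (g : ℝ × ℝ → ℝ) (lam : ℕ → ℝ)
    (u v : ℕ → ℝ → ℝ) : Prop where
  memg : MemLp g 2 (volume.restrict (Ωx ×ˢ Ωy))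
  memu : ∀ n, MemLp (u n) 2 (volume.restrict Ωx)
  memv : ∀ n, MemLp (v n) 2 (volume.restrict Ωy)
  orthou : ∀ n m, (∫ x in Ωx, u n x * u m x) = if n = m then 1 else 0
  orthov : ∀ n m, (∫ y in Ωy, v n y * v m y) = if n = m then 1 else 0
  lampos : ∀ n, 0 < lam n
  lamanti : StrictAnti lam
  conv : Tendsto (fun N =>
    eLpNorm (fun z : ℝ × ℝ =>
      g z - ∑ n ∈ Finset.range N, lam n * u n z.1 * v n z.2) 2
      (volume.restrict (Ωx ×ˢ Ωy))) atTop (nhds 0)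

section Helpers
open intervalIntegral


lemma iooEq' (f : ℝ → ℝ) : ∫ x in Set.Ioo (0:ℝ) 1, f x = ∫ x in (0:ℝ)..1, f x := by
  rw [intervalIntegral.integral_of_le zero_le_one, MeasureTheory.integral_Ioc_eq_integral_Ioo]

lemma bilinear' (e₁ e₂ : ℝ → ℝ) (h₁ : Continuous e₁) (h₂ : Continuous e₂) (A B : ℝ)
    (h11 : (∫ x in Set.Ioo (0:ℝ) 1, e₁ x * e₁ x) = A)
    (h22 : (∫ x in Set.Ioo (0:ℝ) 1, e₂ x * e₂ x) = B)
    (h12 : (∫ x in Set.Ioo (0:ℝ) 1, e₁ x * e₂ x) = 0)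
    (c₁ c₂ d₁ d₂ : ℝ) :
    (∫ x in Set.Ioo (0:ℝ) 1, (c₁ * e₁ x + c₂ * e₂ x) * (d₁ * e₁ x + d₂ * e₂ x))
      = c₁ * d₁ * A + c₂ * d₂ * B := by
  have hi : ∀ g₁ g₂ : ℝ → ℝ, Continuous g₁ → Continuous g₂ → (c : ℝ) →
      IntegrableOn (fun x => c * (g₁ x * g₂ x)) (Set.Ioo (0:ℝ) 1) := fun g₁ g₂ hg₁ hg₂ c =>
    (((continuous_const.mul (hg₁.mul hg₂))).integrableOn_Icc).mono_set Set.Ioo_subset_Icc_self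
  have hcong : (∫ x in Set.Ioo (0:ℝ) 1, (c₁ * e₁ x + c₂ * e₂ x) * (d₁ * e₁ x + d₂ * e₂ x))
      = ∫ x in Set.Ioo (0:ℝ) 1, ((c₁*d₁) * (e₁ x * e₁ x) + (c₁*d₂+c₂*d₁) * (e₁ x * e₂ x))
        + (c₂*d₂) * (e₂ x * e₂ x) := by
    congr 1; funext x; ring
  have e1 : (∫ x in Set.Ioo (0:ℝ) 1, ((c₁*d₁) * (e₁ x * e₁ x) + (c₁*d₂+c₂*d₁) * (e₁ x * e₂ x))
        + (c₂*d₂) * (e₂ x * e₂ x))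
      = ((∫ x in Set.Ioo (0:ℝ) 1, (c₁*d₁) * (e₁ x * e₁ x))
        + ∫ x in Set.Ioo (0:ℝ) 1, (c₁*d₂+c₂*d₁) * (e₁ x * e₂ x))
        + ∫ x in Set.Ioo (0:ℝ) 1, (c₂*d₂) * (e₂ x * e₂ x) := by
    rw [MeasureTheory.integral_add (by exact (hi _ _ h₁ h₁ _).add (hi _ _ h₁ h₂ _)) (by exact hi _ _ h₂ h₂ _),
      MeasureTheory.integral_add (by exact hi _ _ h₁ h₁ _) (by exact hi _ _ h₁ h₂ _)]
  rw [hcong, e1, MeasureTheory.integral_const_mul, MeasureTheory.integral_const_mul, MeasureTheory.integral_const_mul, h11, h22, h12]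
  ring

lemma ibp' (φ ψ : ℝ → ℝ) (hφ : ContDiff ℝ (⊤:ℕ∞) φ) (hψ : ContDiff ℝ (⊤:ℕ∞) ψ)
    (lam : ℝ) (heig : ∀ x ∈ Set.Icc (0:ℝ) 1, deriv (deriv φ) x = -lam * φ x)
    (hb0 : ψ 0 = 0) (hb1 : ψ 1 = 0) :
    (∫ x in Set.Ioo (0:ℝ) 1, deriv φ x * deriv ψ x)
      = lam * ∫ x in Set.Ioo (0:ℝ) 1, φ x * ψ x := by
  have hφ' : ContDiff ℝ (⊤:ℕ∞) (deriv φ) := (contDiff_infty_iff_deriv.mp hφ).2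
  have hcψ' : Continuous (deriv ψ) := ((contDiff_infty_iff_deriv.mp hψ).2).continuous
  have hcφ'' : Continuous (deriv (deriv φ)) := ((contDiff_infty_iff_deriv.mp hφ').2).continuous
  have key := intervalIntegral.integral_deriv_mul_eq_sub
    (u := deriv φ) (v := ψ) (u' := deriv (deriv φ)) (v' := deriv ψ)
    (fun x _ => ((hφ'.differentiable (by norm_num)) x).hasDerivAt)
    (fun x _ => ((hψ.differentiable (by norm_num)) x).hasDerivAt)
    (hcφ''.intervalIntegrable 0 1) (hcψ'.intervalIntegrable 0 1)
  rw [hb0, hb1] at key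
  simp only [mul_zero, sub_zero] at key
  have hsplit : (∫ x in (0:ℝ)..1, deriv (deriv φ) x * ψ x + deriv φ x * deriv ψ x)
      = (∫ x in (0:ℝ)..1, deriv (deriv φ) x * ψ x) + ∫ x in (0:ℝ)..1, deriv φ x * deriv ψ x :=
    intervalIntegral.integral_add ((hcφ''.mul hψ.continuous).intervalIntegrable 0 1)
      ((hφ'.continuous.mul hcψ').intervalIntegrable 0 1)
  rw [hsplit] at key
  have hrepl : (∫ x in (0:ℝ)..1, deriv (deriv φ) x * ψ x)
      = ∫ x in (0:ℝ)..1, -lam * (φ x * ψ x) := by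
    apply intervalIntegral.integral_congr
    intro x hx
    rw [Set.uIcc_of_le zero_le_one] at hx
    simp only []
    rw [heig x hx]; ring
  rw [hrepl, intervalIntegral.integral_const_mul] at key
  rw [iooEq', iooEq']
  linarith [key]

lemma intCongr' (S : Set ℝ) (f g : ℝ → ℝ) (h : ∀ x, f x = g x) :
    (∫ x in S, f x) = ∫ x in S, g x := by rw [funext h]
end Helpers

open Real in
/-- Non-uniqueness of Euler–Lagrange solutions for the Poisson
greedy step: with `φ₁, φ₂` `L²`-orthonormal Dirichlet eigenfunctions of `-d²/dx²`
on `(0,1)` with distinct eigenvalues `λ₁ ≠ λ₂`, and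
`f = -Δ(α₁ φ₁ ⊗ φ₁ + α₂ φ₂ ⊗ φ₂) = 2α₁λ₁ φ₁ ⊗ φ₁ + 2α₂λ₂ φ₂ ⊗ φ₂` with
`α₁ = (9λ₁ + λ₂)/(4λ₁)`, `α₂ = (2λ₁ + 3λ₂)/(2λ₂)`, the pair
`r = φ₁ + ½ φ₂`, `s = 2φ₁ + φ₂` solves the Euler–Lagrange equations
`-(∫ s²) r'' + (∫ s'²) r = ∫ f(·,y) s(y) dy` and
`-(∫ r²) s'' + (∫ r'²) s = ∫ f(x,·) r(x) dx` on `(0,1)`,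
although `r ⊗ s` is not of the form `α_k φ_k ⊗ φ_k`. -/
theorem stmt19 (lam₁ lam₂ : ℝ) (hlam₁ : 0 < lam₁) (hlam₂ : 0 < lam₂)
    (hne : lam₁ ≠ lam₂)
    (φ₁ φ₂ : ℝ → ℝ) (hφ₁ : ContDiff ℝ (⊤ : ℕ∞) φ₁) (hφ₂ : ContDiff ℝ (⊤ : ℕ∞) φ₂)
    (hbd₁ : φ₁ 0 = 0 ∧ φ₁ 1 = 0) (hbd₂ : φ₂ 0 = 0 ∧ φ₂ 1 = 0)
    (heig₁ : ∀ x ∈ Set.Icc (0:ℝ) 1, deriv (deriv φ₁) x = -lam₁ * φ₁ x)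
    (heig₂ : ∀ x ∈ Set.Icc (0:ℝ) 1, deriv (deriv φ₂) x = -lam₂ * φ₂ x)
    (horth₁ : (∫ x in Set.Ioo (0:ℝ) 1, φ₁ x * φ₁ x) = 1)
    (horth₂ : (∫ x in Set.Ioo (0:ℝ) 1, φ₂ x * φ₂ x) = 1)
    (horth₁₂ : (∫ x in Set.Ioo (0:ℝ) 1, φ₁ x * φ₂ x) = 0)
    (α₁ α₂ : ℝ) (hα₁ : α₁ = (9 * lam₁ + lam₂) / (4 * lam₁))
    (hα₂ : α₂ = (2 * lam₁ + 3 * lam₂) / (2 * lam₂))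
    (f : ℝ × ℝ → ℝ)
    (hf : f = fun z => α₁ * (2 * lam₁) * φ₁ z.1 * φ₁ z.2
      + α₂ * (2 * lam₂) * φ₂ z.1 * φ₂ z.2)
    (r s : ℝ → ℝ) (hrdef : r = fun x => φ₁ x + (1 / 2) * φ₂ x)
    (hsdef : s = fun y => 2 * φ₁ y + φ₂ y) :
    (∀ x ∈ Set.Ioo (0:ℝ) 1,
      -(∫ y in Set.Ioo (0:ℝ) 1, (s y) ^ 2) * deriv (deriv r) x
        + (∫ y in Set.Ioo (0:ℝ) 1, (deriv s y) ^ 2) * r x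
        = ∫ y in Set.Ioo (0:ℝ) 1, f (x, y) * s y) ∧
    (∀ y ∈ Set.Ioo (0:ℝ) 1,
      -(∫ x in Set.Ioo (0:ℝ) 1, (r x) ^ 2) * deriv (deriv s) y
        + (∫ x in Set.Ioo (0:ℝ) 1, (deriv r x) ^ 2) * s y
        = ∫ x in Set.Ioo (0:ℝ) 1, f (x, y) * r x) := by
  --
  have hφ₁' : ContDiff ℝ (⊤:ℕ∞) φ₁ := hφ₁.of_le (by simp)
  have hφ₂' : ContDiff ℝ (⊤:ℕ∞) φ₂ := hφ₂.of_le (by simp)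
  have hdφ₁ : ContDiff ℝ (⊤:ℕ∞) (deriv φ₁) := (contDiff_infty_iff_deriv.mp hφ₁').2
  have hdφ₂ : ContDiff ℝ (⊤:ℕ∞) (deriv φ₂) := (contDiff_infty_iff_deriv.mp hφ₂').2
  have hc₁ : Continuous φ₁ := hφ₁'.continuous
  have hc₂ : Continuous φ₂ := hφ₂'.continuous
  have hd₁ : Continuous (deriv φ₁) := hdφ₁.continuous
  have hd₂ : Continuous (deriv φ₂) := hdφ₂.continuous
  -- derivative integrals
  have D11 : (∫ x in Set.Ioo (0:ℝ) 1, deriv φ₁ x * deriv φ₁ x) = lam₁ := by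
    rw [ibp' φ₁ φ₁ hφ₁' hφ₁' lam₁ heig₁ hbd₁.1 hbd₁.2, horth₁]; ring
  have D22 : (∫ x in Set.Ioo (0:ℝ) 1, deriv φ₂ x * deriv φ₂ x) = lam₂ := by
    rw [ibp' φ₂ φ₂ hφ₂' hφ₂' lam₂ heig₂ hbd₂.1 hbd₂.2, horth₂]; ring
  have D12 : (∫ x in Set.Ioo (0:ℝ) 1, deriv φ₁ x * deriv φ₂ x) = 0 := by
    rw [ibp' φ₁ φ₂ hφ₁' hφ₂' lam₁ heig₁ hbd₂.1 hbd₂.2, horth₁₂]; ring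
  -- pointwise derivatives of r and s
  have h1d : ∀ x : ℝ, DifferentiableAt ℝ φ₁ x :=
    fun x => (hφ₁'.differentiable (by norm_num)).differentiableAt
  have h2d : ∀ x : ℝ, DifferentiableAt ℝ φ₂ x :=
    fun x => (hφ₂'.differentiable (by norm_num)).differentiableAt
  have h1dd : ∀ x : ℝ, DifferentiableAt ℝ (deriv φ₁) x :=
    fun x => (hdφ₁.differentiable (by norm_num)).differentiableAt
  have h2dd : ∀ x : ℝ, DifferentiableAt ℝ (deriv φ₂) x :=
    fun x => (hdφ₂.differentiable (by norm_num)).differentiableAt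
  have hdr : deriv r = fun x => deriv φ₁ x + (1/2) * deriv φ₂ x := by
    funext x
    rw [hrdef, deriv_fun_add (h1d x) ((h2d x).const_mul _), deriv_const_mul _ (h2d x)]
  have hds : deriv s = fun y => 2 * deriv φ₁ y + deriv φ₂ y := by
    funext y
    rw [hsdef, deriv_fun_add ((h1d y).const_mul _) (h2d y), deriv_const_mul _ (h1d y)]
  have hddr : ∀ x : ℝ, deriv (deriv r) x
      = deriv (deriv φ₁) x + (1/2) * deriv (deriv φ₂) x := by
    intro x
    rw [hdr, deriv_fun_add (h1dd x) ((h2dd x).const_mul _), deriv_const_mul _ (h2dd x)]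
  have hdds : ∀ y : ℝ, deriv (deriv s) y
      = 2 * deriv (deriv φ₁) y + deriv (deriv φ₂) y := by
    intro y
    rw [hds, deriv_fun_add ((h1dd y).const_mul _) (h2dd y), deriv_const_mul _ (h1dd y)]
  -- the four scalar integrals
  have hS2 : (∫ y in Set.Ioo (0:ℝ) 1, (s y) ^ 2) = 5 := by
    rw [intCongr' _ _ (fun y => (2 * φ₁ y + 1 * φ₂ y) * (2 * φ₁ y + 1 * φ₂ y))
      (fun y => by rw [hsdef]; ring)]
    rw [bilinear' φ₁ φ₂ hc₁ hc₂ 1 1 horth₁ horth₂ horth₁₂ 2 1 2 1]; norm_num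
  have hR2 : (∫ x in Set.Ioo (0:ℝ) 1, (r x) ^ 2) = 5/4 := by
    rw [intCongr' _ _ (fun x => (1 * φ₁ x + (1/2) * φ₂ x) * (1 * φ₁ x + (1/2) * φ₂ x))
      (fun x => by rw [hrdef]; ring)]
    rw [bilinear' φ₁ φ₂ hc₁ hc₂ 1 1 horth₁ horth₂ horth₁₂ 1 (1/2) 1 (1/2)]; norm_num
  have hDS2 : (∫ y in Set.Ioo (0:ℝ) 1, (deriv s y) ^ 2) = 4 * lam₁ + lam₂ := by
    rw [intCongr' _ _
      (fun y => (2 * deriv φ₁ y + 1 * deriv φ₂ y) * (2 * deriv φ₁ y + 1 * deriv φ₂ y))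
      (fun y => by rw [hds]; ring)]
    rw [bilinear' (deriv φ₁) (deriv φ₂) hd₁ hd₂ lam₁ lam₂ D11 D22 D12 2 1 2 1]; ring
  have hDR2 : (∫ x in Set.Ioo (0:ℝ) 1, (deriv r x) ^ 2) = lam₁ + (1/4) * lam₂ := by
    rw [intCongr' _ _
      (fun x => (1 * deriv φ₁ x + (1/2) * deriv φ₂ x) * (1 * deriv φ₁ x + (1/2) * deriv φ₂ x))
      (fun x => by rw [hdr]; ring)]
    rw [bilinear' (deriv φ₁) (deriv φ₂) hd₁ hd₂ lam₁ lam₂ D11 D22 D12 1 (1/2) 1 (1/2)]; ring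
  constructor
  · intro x hx
    have hxI : x ∈ Set.Icc (0:ℝ) 1 := Set.mem_Icc_of_Ioo hx
    have hrhs : (∫ y in Set.Ioo (0:ℝ) 1, f (x, y) * s y)
        = (α₁ * (2 * lam₁) * φ₁ x) * 2 * 1 + (α₂ * (2 * lam₂) * φ₂ x) * 1 * 1 := by
      rw [intCongr' _ _
        (fun y => ((α₁ * (2 * lam₁) * φ₁ x) * φ₁ y + (α₂ * (2 * lam₂) * φ₂ x) * φ₂ y)
          * (2 * φ₁ y + 1 * φ₂ y)) (fun y => by rw [hf, hsdef]; ring)]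
      exact bilinear' φ₁ φ₂ hc₁ hc₂ 1 1 horth₁ horth₂ horth₁₂ _ _ 2 1
    rw [hrhs, hS2, hDS2, hddr x, heig₁ x hxI, heig₂ x hxI, hrdef, hα₁, hα₂]
    field_simp
    ring
  · intro y hy
    have hyI : y ∈ Set.Icc (0:ℝ) 1 := Set.mem_Icc_of_Ioo hy
    have hrhs : (∫ x in Set.Ioo (0:ℝ) 1, f (x, y) * r x)
        = (α₁ * (2 * lam₁) * φ₁ y) * 1 * 1 + (α₂ * (2 * lam₂) * φ₂ y) * (1/2) * 1 := by
      rw [intCongr' _ _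
        (fun x => ((α₁ * (2 * lam₁) * φ₁ y) * φ₁ x + (α₂ * (2 * lam₂) * φ₂ y) * φ₂ x)
          * (1 * φ₁ x + (1/2) * φ₂ x)) (fun x => by rw [hf, hrdef]; ring)]
      exact bilinear' φ₁ φ₂ hc₁ hc₂ 1 1 horth₁ horth₂ horth₁₂ _ _ 1 (1/2)
    rw [hrhs, hR2, hDR2, hdds y, heig₁ y hyI, heig₂ y hyI, hsdef, hα₁, hα₂]
    field_simp
    ring

end
end
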